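/- Let 2 ≤ ℓ ≤ k and let S ⊆ B_n. For w ∈ P^{n-1}(F_q), set t_{w,S} = |{v ∈ S : (ρ_n ∘ γ_n)(v) = w}|. Then S is (k,ℓ)-orthogonal if and only if for every subset I ⊆ P^{n-1}(F_q) of (projective) dimension at most ℓ-2, one has Σ_{w ∈ I} t_{w,S} ≤ k-1. -/

import Mathlib

open scoped NNReal

/-- The infinity norm on `K^n` induced by an absolute value `abv` on `K`. -/
noncomputable def vnorm {K : Type} [Field K] (abv : K → ℝ≥0) {n : ℕ}
    (v : Fin n → K) : ℝ≥0 :=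
  Finset.univ.sup fun i => abv (v i)

/-- A finite set of vectors of `K^n` is orthogonal if its elements are nonzero and the norm of
any linear combination of its elements is the maximum of the norms of the summands. -/
def IsOrthSet {K : Type} [Field K] (abv : K → ℝ≥0) {n : ℕ}
    (F : Finset (Fin n → K)) : Prop :=
  (∀ v ∈ F, v ≠ 0) ∧
    ∀ c : (Fin n → K) → K,
      vnorm abv (∑ v ∈ F, c v • v) = F.sup fun v => vnorm abv (c v • v)

/-- A finite set `S` of vectors is `(k, l)`-orthogonal if any subset of `S` of size `k`
contains an orthogonal subset of size `l`. -/
def IsKLOrth {K : Type} [Field K] (abv : K → ℝ≥0) {n : ℕ} (k l : ℕ)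
    (S : Finset (Fin n → K)) : Prop :=
  ∀ E ⊆ S, E.card = k → ∃ F ⊆ E, F.card = l ∧ IsOrthSet abv F

/-- `Theta abv n k l` is the maximum size of a `(k, l)`-orthogonal subset of the unit
sphere of `K^n`. -/
noncomputable def Theta {K : Type} [Field K] (abv : K → ℝ≥0) (n k l : ℕ) : ℕ :=
  sSup {m | ∃ S : Finset (Fin n → K),
    (∀ v ∈ S, vnorm abv v = 1) ∧ IsKLOrth abv k l S ∧ S.card = m}

/-- A subset `S` of `K^n` is `(k, l)`-orthogonal if any finite subset of `S` of size `k`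
contains an orthogonal subset of size `l`. -/
def IsKLOrthSet {K : Type} [Field K] (abv : K → ℝ≥0) {n : ℕ} (k l : ℕ)
    (S : Set (Fin n → K)) : Prop :=
  ∀ E : Finset (Fin n → K), ↑E ⊆ S → E.card = k → ∃ F ⊆ E, F.card = l ∧ IsOrthSet abv F

/-!
For unit vectors, orthogonality is linear independence of the reductions modulo `𝔪`: a
combination `∑ c_w • w` whose largest coefficient has absolute value `1` has norm `< 1` exactly
when its reduction `∑ res (c_w) • res ∘ w` vanishes. So `S` is `(k, l)`-orthogonal iff the
reductions of any `k` of its elements span a space of dimension at least `l`. Reductions of `k`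
elements lying in a projective subspace of dimension `≤ l - 2` break this; conversely, if the
reductions of `k` elements span a space of dimension `< l`, the points of that projective
subspace form a set `I` of dimension `≤ l - 2` capturing all `k` of them.
-/

variable {K κ : Type} [Field K] [Field κ] {n : ℕ}

def Valuation.ofUltrametric (abv : K → ℝ≥0) (abv_eq_zero : ∀ x : K, abv x = 0 ↔ x = 0)
    (abv_mul : ∀ x y : K, abv (x * y) = abv x * abv y)
    (abv_add : ∀ x y : K, abv (x + y) ≤ max (abv x) (abv y)) : Valuation K ℝ≥0 where
  toFun := abv
  map_zero' := (abv_eq_zero 0).mpr rfl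
  map_one' := by
    have h : abv 1 * abv 1 = abv 1 * 1 := by rw [← abv_mul, mul_one, mul_one]
    exact mul_left_cancel₀ (fun h0 => one_ne_zero ((abv_eq_zero 1).mp h0)) h
  map_mul' := abv_mul
  map_add_le_max' := abv_add

/-- `res` models the reduction `𝒪 → 𝒪 / 𝔪 = κ`; only its values on the valuation ring
`𝒪 = {x | v x ≤ 1}` are constrained. -/
structure IsResidueMap (v : Valuation K ℝ≥0) (res : K → κ) : Prop where
  map_add : ∀ x y : K, v x ≤ 1 → v y ≤ 1 → res (x + y) = res x + res y
  map_mul : ∀ x y : K, v x ≤ 1 → v y ≤ 1 → res (x * y) = res x * res y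
  eq_zero_iff : ∀ x : K, v x ≤ 1 → (res x = 0 ↔ v x < 1)
  exists_eq : ∀ c : κ, ∃ x : K, v x ≤ 1 ∧ res x = c

section vnorm

theorem vnorm_le_iff {abv : K → ℝ≥0} {x : Fin n → K} {t : ℝ≥0} :
    vnorm abv x ≤ t ↔ ∀ i, abv (x i) ≤ t := by
  simp [vnorm, Finset.sup_le_iff]

theorem vnorm_lt_one_iff {abv : K → ℝ≥0} {x : Fin n → K} :
    vnorm abv x < 1 ↔ ∀ i, abv (x i) < 1 := by
  simp [vnorm, Finset.sup_lt_iff]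

variable (v : Valuation K ℝ≥0)

@[simp]
theorem vnorm_zero : vnorm v (0 : Fin n → K) = 0 := by
  simp [vnorm]

theorem vnorm_smul (c : K) (x : Fin n → K) : vnorm v (c • x) = v c * vnorm v x := by
  simp [vnorm, NNReal.mul_finset_sup]

theorem vnorm_sum_smul_le_one {F : Finset (Fin n → K)} {c : (Fin n → K) → K}
    (hc : ∀ w ∈ F, v (c w) ≤ 1) (hF : ∀ w ∈ F, vnorm v w ≤ 1) :
    vnorm v (∑ w ∈ F, c w • w) ≤ 1 := by
  refine vnorm_le_iff.mpr fun i => ?_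
  simp only [Finset.sum_apply, Pi.smul_apply, smul_eq_mul]
  exact v.map_sum_le fun w hw =>
    (v.map_mul _ _).trans_le (mul_le_one' (hc w hw) (vnorm_le_iff.mp (hF w hw) i))

end vnorm

namespace IsResidueMap

variable {v : Valuation K ℝ≥0} {res : K → κ}

theorem map_zero (hres : IsResidueMap v res) : res 0 = 0 := by
  have h := hres.map_add 0 0 (by simp) (by simp)
  rwa [add_zero, left_eq_add] at h

theorem map_sum (hres : IsResidueMap v res) {ι : Type*} (s : Finset ι) {f : ι → K}
    (hf : ∀ i ∈ s, v (f i) ≤ 1) : res (∑ i ∈ s, f i) = ∑ i ∈ s, res (f i) := by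
  induction s using Finset.cons_induction with
  | empty => simp [hres.map_zero]
  | cons a s ha ih =>
    have hs : ∀ i ∈ s, v (f i) ≤ 1 := fun i hi => hf i (Finset.mem_cons_of_mem hi)
    rw [Finset.sum_cons, Finset.sum_cons, hres.map_add _ _ (hf a (Finset.mem_cons_self a s))
      (v.map_sum_le hs), ih hs]

theorem comp_eq_zero_iff (hres : IsResidueMap v res) {x : Fin n → K} (hx : vnorm v x ≤ 1) :
    res ∘ x = 0 ↔ vnorm v x < 1 := by
  rw [vnorm_lt_one_iff, funext_iff]
  exact forall_congr' fun i => hres.eq_zero_iff _ (vnorm_le_iff.mp hx i)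

theorem comp_sum_smul (hres : IsResidueMap v res) {F : Finset (Fin n → K)}
    {c : (Fin n → K) → K} (hc : ∀ w ∈ F, v (c w) ≤ 1) (hF : ∀ w ∈ F, vnorm v w ≤ 1) :
    res ∘ (∑ w ∈ F, c w • w) = ∑ w ∈ F, res (c w) • (res ∘ w) := by
  funext i
  have hterm : ∀ w ∈ F, v (c w * w i) ≤ 1 := fun w hw =>
    (v.map_mul _ _).trans_le (mul_le_one' (hc w hw) (vnorm_le_iff.mp (hF w hw) i))
  simp only [Function.comp_apply, Finset.sum_apply, Pi.smul_apply, smul_eq_mul]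
  rw [hres.map_sum F hterm]
  exact Finset.sum_congr rfl fun w hw =>
    hres.map_mul _ _ (hc w hw) (vnorm_le_iff.mp (hF w hw) i)

theorem comp_ne_zero (hres : IsResidueMap v res) {x : Fin n → K} (hx : vnorm v x = 1) :
    res ∘ x ≠ 0 := by
  rw [ne_eq, hres.comp_eq_zero_iff hx.le, hx]
  exact lt_irrefl 1

end IsResidueMap

section Orthogonality

variable {v : Valuation K ℝ≥0} {res : K → κ} {F : Finset (Fin n → K)}

theorem vnorm_sum_smul_eq_one (hres : IsResidueMap v res) (hF : ∀ w ∈ F, vnorm v w = 1)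
    (hli : LinearIndepOn κ (res ∘ ·) (F : Set (Fin n → K))) {c : (Fin n → K) → K}
    (hc : ∀ w ∈ F, v (c w) ≤ 1) {j : Fin n → K} (hj : j ∈ F) (hcj : v (c j) = 1) :
    vnorm v (∑ w ∈ F, c w • w) = 1 := by
  have hF' : ∀ w ∈ F, vnorm v w ≤ 1 := fun w hw => (hF w hw).le
  have hle := vnorm_sum_smul_le_one v hc hF'
  refine hle.antisymm (not_lt.mp fun hlt => ?_)
  have hsum : ∑ w ∈ F, res (c w) • (res ∘ w) = 0 := by
    rwa [← hres.comp_sum_smul hc hF', hres.comp_eq_zero_iff hle]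
  have hresj := linearIndepOn_finset_iff.mp hli _ hsum j hj
  rw [hres.eq_zero_iff _ (hc j hj), hcj] at hresj
  exact lt_irrefl 1 hresj

theorem isOrthSet_of_linearIndepOn (hres : IsResidueMap v res) (hF : ∀ w ∈ F, vnorm v w = 1)
    (hli : LinearIndepOn κ (res ∘ ·) (F : Set (Fin n → K))) : IsOrthSet v F := by
  refine ⟨fun w hw h0 => by simpa [h0] using hF w hw, fun c => ?_⟩
  have hrhs : (F.sup fun w => vnorm v (c w • w)) = F.sup fun w => v (c w) :=
    Finset.sup_congr rfl fun w hw => by rw [vnorm_smul, hF w hw, mul_one]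
  rw [hrhs]
  rcases F.eq_empty_or_nonempty with rfl | hne
  · simp
  obtain ⟨j, hj, hjmax⟩ := F.exists_max_image (fun w => v (c w)) hne
  rw [le_antisymm (Finset.sup_le hjmax) (Finset.le_sup (f := fun w => v (c w)) hj)]
  by_cases hcj : c j = 0
  · have hc0 : ∀ w ∈ F, c w = 0 := fun w hw => by simpa [hcj] using hjmax w hw
    rw [Finset.sum_eq_zero fun w hw => by rw [hc0 w hw, zero_smul], hcj, vnorm_zero, map_zero]
  -- normalize by the coefficient of largest absolute value
  have hscale : ∑ w ∈ F, c w • w = c j • ∑ w ∈ F, (c w / c j) • w := by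
    rw [Finset.smul_sum]
    exact Finset.sum_congr rfl fun w _ => by rw [smul_smul, mul_div_cancel₀ _ hcj]
  have hle : ∀ w ∈ F, v (c w / c j) ≤ 1 := fun w hw => by
    rw [map_div₀]
    exact div_le_one_of_le₀ (hjmax w hw) zero_le
  rw [hscale, vnorm_smul, vnorm_sum_smul_eq_one hres hF hli hle hj (by simp [hcj]), mul_one]

theorem linearIndepOn_of_isOrthSet (hres : IsResidueMap v res) (hF : ∀ w ∈ F, vnorm v w = 1)
    (horth : IsOrthSet v F) : LinearIndepOn κ (res ∘ ·) (F : Set (Fin n → K)) := by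
  refine linearIndepOn_finset_iff.mpr fun g hg j hj => ?_
  choose c hc hresc using hres.exists_eq
  have hF' : ∀ w ∈ F, vnorm v w ≤ 1 := fun w hw => (hF w hw).le
  have hlt : vnorm v (∑ w ∈ F, c (g w) • w) < 1 := by
    rw [← hres.comp_eq_zero_iff (vnorm_sum_smul_le_one v (fun w _ => hc _) hF'),
      hres.comp_sum_smul (fun w _ => hc _) hF']
    simpa only [hresc] using hg
  by_contra hgj
  have hcj : v (c (g j)) = 1 :=
    (hc _).antisymm (not_lt.mp fun h => hgj (hresc (g j) ▸ (hres.eq_zero_iff _ (hc _)).mpr h))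
  rw [horth.2] at hlt
  refine hlt.not_ge (le_trans ?_ (Finset.le_sup (f := fun w => vnorm v (c (g w) • w)) hj))
  rw [vnorm_smul, hF j hj, hcj, mul_one]

theorem isOrthSet_iff_linearIndepOn (hres : IsResidueMap v res) (hF : ∀ w ∈ F, vnorm v w = 1) :
    IsOrthSet v F ↔ LinearIndepOn κ (res ∘ ·) (F : Set (Fin n → K)) :=
  ⟨linearIndepOn_of_isOrthSet hres hF, isOrthSet_of_linearIndepOn hres hF⟩

end Orthogonality

section LinearAlgebra

open Module Submodule

variable {𝕜 V ι : Type*} [DivisionRing 𝕜] [AddCommGroup V] [Module 𝕜 V] {f : ι → V}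

theorem LinearIndepOn.finrank_span_image {s : Finset ι} (h : LinearIndepOn 𝕜 f (s : Set ι)) :
    finrank 𝕜 (span 𝕜 (f '' s)) = s.card := by
  rw [Set.image_eq_range, finrank_span_eq_card h]
  simp

theorem LinearIndepOn.card_le_finrank {s : Finset ι} (h : LinearIndepOn 𝕜 f (s : Set ι))
    {W : Submodule 𝕜 V} [Module.Finite 𝕜 W] (hW : ∀ i ∈ s, f i ∈ W) : s.card ≤ finrank 𝕜 W := by
  rw [← h.finrank_span_image]
  exact Submodule.finrank_mono (span_le.mpr (by rintro _ ⟨i, hi, rfl⟩; exact hW i hi))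

theorem exists_linearIndepOn_finset_card_eq (f : ι → V) (E : Finset ι) {l : ℕ}
    (hl : l ≤ finrank 𝕜 (span 𝕜 (f '' E))) :
    ∃ F ⊆ E, F.card = l ∧ LinearIndepOn 𝕜 f (F : Set ι) := by
  obtain ⟨b, hbE, -, hspan, hb⟩ :=
    exists_linearIndepOn_extension (linearIndepOn_empty 𝕜 f) (Set.empty_subset (E : Set ι))
  obtain ⟨B, rfl⟩ := ((E : Set ι).toFinite.subset hbE).exists_finset_coe
  have hlB : l ≤ B.card := by
    have := Module.Finite.span_of_finite 𝕜 ((B : Set ι).toFinite.image f)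
    rw [← hb.finrank_span_image]
    exact hl.trans (Submodule.finrank_mono (span_le.mpr hspan))
  obtain ⟨F, hFB, hFl⟩ := Finset.exists_subset_card_eq hlB
  exact ⟨F, hFB.trans (mod_cast hbE), hFl, hb.mono (mod_cast hFB)⟩

end LinearAlgebra

namespace Projectivization

variable {𝕜 V : Type*} [DivisionRing 𝕜] [AddCommGroup V] [Module 𝕜 V]

theorem submodule_mk_le_iff {x : V} (hx : x ≠ 0) {W : Submodule 𝕜 V} :
    (mk 𝕜 x hx).submodule ≤ W ↔ x ∈ W := by
  rw [submodule_mk, Submodule.span_singleton_le_iff_mem]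

theorem mem_iSup_submodule {I : Set (Projectivization 𝕜 V)} {x : V} (hx : x ≠ 0)
    (h : mk 𝕜 x hx ∈ I) :
    x ∈ ⨆ p ∈ I, p.submodule :=
  (submodule_mk_le_iff hx).mp (le_iSup₂ (f := fun p _ => p.submodule) _ h)

end Projectivization

theorem Set.exists_finset_subset_card_eq {α : Type*} {s : Set α} {k : ℕ}
    (h : (k : ℕ∞) ≤ s.encard) : ∃ E : Finset α, ↑E ⊆ s ∧ E.card = k := by
  obtain ⟨t, hts, ht⟩ := Set.exists_subset_encard_eq h
  obtain ⟨E, rfl⟩ := (Set.finite_of_encard_eq_coe ht).exists_finset_coe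
  exact ⟨E, hts, by simpa [Set.encard_coe_eq_coe_finsetCard] using ht⟩

theorem isKLOrth_iff_fiber_sums_general {K : Type} [Field K] (n k l : ℕ) (abv : K → ℝ≥0)
    (κ : Type) [Field κ] (res : K → κ)
    (habv0 : ∀ x : K, abv x = 0 ↔ x = 0)
    (habvmul : ∀ x y : K, abv (x * y) = abv x * abv y)
    (habvadd : ∀ x y : K, abv (x + y) ≤ max (abv x) (abv y))
    (hres_add : ∀ x y : K, abv x ≤ 1 → abv y ≤ 1 → res (x + y) = res x + res y)
    (hres_mul : ∀ x y : K, abv x ≤ 1 → abv y ≤ 1 → res (x * y) = res x * res y)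
    (hres_zero : ∀ x : K, abv x ≤ 1 → (res x = 0 ↔ abv x < 1))
    (hres_surj : ∀ c : κ, ∃ x : K, abv x ≤ 1 ∧ res x = c)
    (hlk : l ≤ k)
    (S : Set (Fin n → K)) (hS : ∀ v ∈ S, vnorm abv v = 1) :
    IsKLOrthSet abv k l S ↔
      ∀ I : Set (Projectivization κ (Fin n → κ)),
        (Module.finrank κ ↥(⨆ p ∈ I, Projectivization.submodule p) : ℤ) - 1 ≤ (l : ℤ) - 2 →
          Set.encard {w : Fin n → K | w ∈ S ∧
              ∃ h : (fun i => res (w i)) ≠ 0, Projectivization.mk κ (fun i => res (w i)) h ∈ I}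
            ≤ ((k - 1 : ℕ) : ℕ∞) := by
  set v := Valuation.ofUltrametric abv habv0 habvmul habvadd
  have hres : IsResidueMap v res := ⟨hres_add, hres_mul, hres_zero, hres_surj⟩
  have horth_iff (F : Finset (Fin n → K)) (hF : ↑F ⊆ S) :=
    isOrthSet_iff_linearIndepOn hres fun w hw => hS w (hF hw)
  constructor
  · intro horth I hI
    by_contra! hcard
    obtain ⟨E, hEsub, hEk⟩ := Set.exists_finset_subset_card_eq <|
      (Nat.cast_le.mpr le_tsub_add).trans (Order.add_one_le_of_lt hcard)
    have hES : ↑E ⊆ S := fun w hw => (hEsub hw).1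
    obtain ⟨F, hFE, hFl, hFo⟩ := horth E hES hEk
    have hlW := ((horth_iff F ((Finset.coe_subset.mpr hFE).trans hES)).mp hFo).card_le_finrank
      (W := ⨆ p ∈ I, Projectivization.submodule p)
      fun w hw => Projectivization.mem_iSup_submodule _ (hEsub (hFE hw)).2.choose_spec
    omega
  · intro hfib E hES hEk
    set W := Submodule.span κ ((res ∘ ·) '' (E : Set (Fin n → K)))
    by_cases hW : l ≤ Module.finrank κ W
    · obtain ⟨F, hFE, hFl, hF⟩ := exists_linearIndepOn_finset_card_eq _ E hW
      exact ⟨F, hFE, hFl, (horth_iff F ((Finset.coe_subset.mpr hFE).trans hES)).mpr hF⟩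
    · have hsub : (E : Set (Fin n → K)) ⊆ {w | w ∈ S ∧ ∃ h : res ∘ w ≠ 0,
          Projectivization.mk κ (res ∘ w) h ∈ {p | p.submodule ≤ W}} := fun w hw =>
        ⟨hES hw, hres.comp_ne_zero (hS w (hES hw)),
          (Projectivization.submodule_mk_le_iff _).mpr (Submodule.subset_span ⟨w, hw, rfl⟩)⟩
      have hdim := Submodule.finrank_mono (iSup₂_le fun p hp => hp :
        ⨆ p ∈ {p : Projectivization κ (Fin n → κ) | p.submodule ≤ W}, p.submodule ≤ W)
      have hk := (Set.encard_mono hsub).trans (hfib _ (by omega))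
      rw [Set.encard_coe_eq_coe_finsetCard, hEk, Nat.cast_le] at hk
      omega

/-- **Characterization of `(k,l)`-orthogonality by fiber counts.**
Let `2 ≤ l ≤ k` and let `S` be a subset of the unit sphere of `K^n`, where `K` is a discrete
valued field with finite residue field `κ` of cardinality `q`, `γ_n` the coordinatewise
reduction `res`, `ρ_n` the projection to `ℙ^{n-1}(κ)`. Then `S` is `(k,l)`-orthogonal iff
for every subset `I ⊆ ℙ^{n-1}(κ)` whose projective span has (projective) dimension at most
`l - 2`, the total number of elements of `S` mapping under `ρ_n ∘ γ_n` into `I` (which is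
`Σ_{w ∈ I} t_{w,S}`) is at most `k - 1`. -/
theorem isKLOrth_iff_fiber_sums {K : Type} [Field K] (q n k l : ℕ) (abv : K → ℝ≥0)
    (κ : Type) [Field κ] [Fintype κ] (res : K → κ)
    (hq : Fintype.card κ = q)
    (habv0 : ∀ x : K, abv x = 0 ↔ x = 0)
    (habvmul : ∀ x y : K, abv (x * y) = abv x * abv y)
    (habvadd : ∀ x y : K, abv (x + y) ≤ max (abv x) (abv y))
    (habvdisc : ∀ x : K, x ≠ 0 → ∃ e : ℤ, abv x = (q : ℝ≥0) ^ e)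
    (hres_add : ∀ x y : K, abv x ≤ 1 → abv y ≤ 1 → res (x + y) = res x + res y)
    (hres_mul : ∀ x y : K, abv x ≤ 1 → abv y ≤ 1 → res (x * y) = res x * res y)
    (hres_one : res 1 = 1)
    (hres_zero : ∀ x : K, abv x ≤ 1 → (res x = 0 ↔ abv x < 1))
    (hres_surj : ∀ c : κ, ∃ x : K, abv x ≤ 1 ∧ res x = c)
    (hl : 2 ≤ l) (hlk : l ≤ k)
    (S : Set (Fin n → K)) (hS : ∀ v ∈ S, vnorm abv v = 1) :
    IsKLOrthSet abv k l S ↔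
      ∀ I : Set (Projectivization κ (Fin n → κ)),
        (Module.finrank κ ↥(⨆ p ∈ I, Projectivization.submodule p) : ℤ) - 1 ≤ (l : ℤ) - 2 →
          Set.encard {w : Fin n → K | w ∈ S ∧
              ∃ h : (fun i => res (w i)) ≠ 0, Projectivization.mk κ (fun i => res (w i)) h ∈ I}
            ≤ ((k - 1 : ℕ) : ℕ∞) :=
  isKLOrth_iff_fiber_sums_general n k l abv κ res habv0 habvmul habvadd hres_add hres_mul hres_zero
    hres_surj hlk S hS
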